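/- If A_1,...,A_n and B_1,...,B_n are vectors in a complex Hilbert space, then the absolute value of the determinant of the n×n matrix with entries ⟨A_i, B_j⟩ is at most the product over i of ‖A_i‖·‖B_i‖. -/

import Mathlib

/-!
If the `A i` are linearly dependent, so are the rows of the matrix, and its determinant vanishes.
Otherwise they span an `n`-dimensional subspace `K`, and `⟪A i, B j⟫ = ⟪A i, P (B j)⟫` for the
orthogonal projection `P` onto `K`. In an orthonormal basis of `K` the matrix factors as `Xᴴ Y`,
where `X` and `Y` are the coordinate matrices of `A` and of `P ∘ B`. By Hadamard's inequality
`‖det X‖ ≤ ∏ ‖A i‖` and `‖det Y‖ ≤ ∏ ‖P (B j)‖ ≤ ∏ ‖B j‖`.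

Hadamard's inequality for a family `v` holds because the modulus of the determinant does not
depend on the orthonormal basis, and in the one obtained from `v` by Gram–Schmidt the coordinate
matrix of `v` is triangular with diagonal entries `⟪e i, v i⟫`.
-/

open Module Submodule InnerProductSpace

section

variable {𝕜 E ι : Type*} [RCLike 𝕜] [NormedAddCommGroup E] [InnerProductSpace 𝕜 E] [Fintype ι]

theorem Module.Basis.det_eq_det_mul_det {R M : Type*} [CommRing R] [AddCommGroup M] [Module R M]
    [DecidableEq ι] (b c : Basis ι R M) (v : ι → M) :
    b.det v = b.det c * c.det v := by
  rw [Basis.det_apply, Basis.det_apply, Basis.det_apply, ← Matrix.det_mul,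
    Basis.toMatrix_mul_toMatrix]

theorem OrthonormalBasis.det_of_inner_eq_star_det_mul_det [DecidableEq ι]
    (b : OrthonormalBasis ι 𝕜 E) (v w : ι → E) :
    (Matrix.of fun i j => ⟪v i, w j⟫_𝕜).det = star (b.toBasis.det v) * b.toBasis.det w := by
  rw [Basis.det_apply, Basis.det_apply, ← Matrix.det_conjTranspose, ← Matrix.det_mul]
  congr 1
  ext i j
  simp only [Matrix.mul_apply, Matrix.conjTranspose_apply, Basis.toMatrix_apply,
    OrthonormalBasis.coe_toBasis_repr_apply, b.repr_apply_apply, Matrix.of_apply]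
  rw [← b.sum_inner_mul_inner]
  simp [inner_conj_symm]

theorem OrthonormalBasis.norm_det_le_prod_norm [LinearOrder ι] [LocallyFiniteOrderBot ι]
    (b : OrthonormalBasis ι 𝕜 E) (v : ι → E) : ‖b.toBasis.det v‖ ≤ ∏ i, ‖v i‖ := by
  have : FiniteDimensional 𝕜 E := b.toBasis.finiteDimensional_of_finite
  let c := gramSchmidtOrthonormalBasis (finrank_eq_card_basis b.toBasis) v
  have hc : c.toBasis.det v = ∏ i, ⟪c i, v i⟫_𝕜 := gramSchmidtOrthonormalBasis_det _ v
  rw [b.toBasis.det_eq_det_mul_det c.toBasis, hc, norm_mul, OrthonormalBasis.coe_toBasis,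
    b.det_to_matrix_orthonormalBasis c, one_mul, norm_prod]
  gcongr with i
  calc ‖⟪c i, v i⟫_𝕜‖ ≤ ‖c i‖ * ‖v i‖ := norm_inner_le_norm _ _
    _ = ‖v i‖ := by rw [c.norm_eq_one, one_mul]

theorem norm_det_of_inner_le_of_finrank_eq [LinearOrder ι] [LocallyFiniteOrderBot ι]
    [FiniteDimensional 𝕜 E] (h : finrank 𝕜 E = Fintype.card ι) (v w : ι → E) :
    ‖(Matrix.of fun i j => ⟪v i, w j⟫_𝕜).det‖ ≤ ∏ i, ‖v i‖ * ‖w i‖ := by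
  let b := gramSchmidtOrthonormalBasis h v
  rw [b.det_of_inner_eq_star_det_mul_det, norm_mul, norm_star, Finset.prod_mul_distrib]
  exact mul_le_mul (b.norm_det_le_prod_norm v) (b.norm_det_le_prod_norm w) (norm_nonneg _)
    (by positivity)

theorem norm_det_of_inner_le_of_linearIndependent [LinearOrder ι] [LocallyFiniteOrderBot ι]
    {v : ι → E} (hv : LinearIndependent 𝕜 v) (w : ι → E) :
    ‖(Matrix.of fun i j => ⟪v i, w j⟫_𝕜).det‖ ≤ ∏ i, ‖v i‖ * ‖w i‖ := by
  let K := span 𝕜 (Set.range v)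
  have : FiniteDimensional 𝕜 K := FiniteDimensional.span_of_finite 𝕜 (Set.finite_range v)
  let v' : ι → K := fun i => ⟨v i, subset_span (Set.mem_range_self i)⟩
  let w' : ι → K := fun i => K.orthogonalProjectionOnto (w i)
  have hvw : (Matrix.of fun i j => ⟪v i, w j⟫_𝕜) = Matrix.of fun i j => ⟪v' i, w' j⟫_𝕜 := by
    ext i j
    simp [v', w']
  calc _ ≤ ∏ i, ‖v' i‖ * ‖w' i‖ := by
        rw [hvw]
        exact norm_det_of_inner_le_of_finrank_eq (finrank_span_eq_card hv) v' w'
    _ ≤ ∏ i, ‖v i‖ * ‖w i‖ := by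
        gcongr with i
        exacts [le_rfl, K.norm_orthogonalProjectionOnto_apply_le (w i)]

theorem det_of_inner_eq_zero_of_not_linearIndependent [DecidableEq ι] {v : ι → E}
    (hv : ¬LinearIndependent 𝕜 v) (w : ι → E) :
    (Matrix.of fun i j => ⟪v i, w j⟫_𝕜).det = 0 := by
  obtain ⟨c, hc, i, hi⟩ := Fintype.not_linearIndependent_iff.mp hv
  have hc' : star c ≠ 0 := fun h => hi (by simpa using congr_fun h i)
  refine Matrix.exists_vecMul_eq_zero_iff.mp ⟨star c, hc', ?_⟩
  ext j
  simp [Matrix.vecMul, dotProduct, ← inner_smul_left, ← sum_inner, hc]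

end

theorem gram_hadamard_general {E : Type*} [NormedAddCommGroup E] [InnerProductSpace ℂ E]
    {n : ℕ} (A B : Fin n → E) :
    ‖(Matrix.of fun i j => (inner ℂ (A i) (B j) : ℂ)).det‖ ≤ ∏ i, ‖A i‖ * ‖B i‖ := by
  by_cases hA : LinearIndependent ℂ A
  · exact norm_det_of_inner_le_of_linearIndependent hA B
  · rw [det_of_inner_eq_zero_of_not_linearIndependent hA, norm_zero]
    positivity

/-- Gram–Hadamard inequality: for vectors `A i`, `B j` in a complex Hilbert space,
the determinant of the Gram-type matrix `⟪A i, B j⟫` is bounded by `∏ i, ‖A i‖ * ‖B i‖`. -/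
theorem gram_hadamard {E : Type*} [NormedAddCommGroup E] [InnerProductSpace ℂ E]
    [CompleteSpace E] {n : ℕ} (A B : Fin n → E) :
    ‖(Matrix.of fun i j => (inner ℂ (A i) (B j) : ℂ)).det‖ ≤ ∏ i, ‖A i‖ * ‖B i‖ :=
  gram_hadamard_general A B
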